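/- If ∇f(u) ∈ A for all u ∈ H where A is a closed subspace with projector P_A, then for any u₁, u₂ with P_A u₁ = P_A u₂ we have ∇f(u₁) = ∇f(u₂). -/

import Mathlib

/-!
Since `∇f` takes values in `A`, every directional derivative of `f` along `Aᗮ` vanishes, so `f`
is invariant under translation by `u₂ - u₁ ∈ Aᗮ`, and hence so is its gradient.
-/

open RealInnerProductSpace

theorem Submodule.sub_mem_orthogonal_of_orthogonalProjectionOnto_eq {𝕜 E : Type*} [RCLike 𝕜]
    [NormedAddCommGroup E] [InnerProductSpace 𝕜 E] (K : Submodule 𝕜 E)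
    [K.HasOrthogonalProjection] {u v : E}
    (h : K.orthogonalProjectionOnto u = K.orthogonalProjectionOnto v) : u - v ∈ Kᗮ := by
  rw [← K.orthogonalProjectionOnto_eq_zero_iff, map_sub, h, sub_self]

theorem fderiv_apply_eq_zero_of_gradient_mem {H : Type*} [NormedAddCommGroup H]
    [InnerProductSpace ℝ H] [CompleteSpace H] {A : Submodule ℝ H} {f : H → ℝ} {x w : H}
    (hx : gradient f x ∈ A) (hw : w ∈ Aᗮ) : fderiv ℝ f x w = 0 := by
  rw [← inner_gradient_left]
  exact Submodule.inner_right_of_mem_orthogonal hx hw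

theorem add_eq_of_fderiv_apply_eq_zero {E : Type*} [NormedAddCommGroup E] [NormedSpace ℝ E]
    {f : E → ℝ} (hf : Differentiable ℝ f) {w : E} (h : ∀ x, fderiv ℝ f x w = 0) (x : E) :
    f (x + w) = f x := by
  have hline : ∀ t : ℝ, HasDerivAt (fun t : ℝ => f (x + t • w)) 0 t := fun t => by
    have hpath : HasDerivAt (fun t : ℝ => x + t • w) w t := by
      simpa using ((hasDerivAt_id t).smul_const w).const_add x
    have := (hf _).hasFDerivAt.comp_hasDerivAt t hpath
    rwa [h] at this
  simpa using is_const_of_deriv_eq_zero (fun t => (hline t).differentiableAt)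
    (fun t => (hline t).deriv) 1 0

theorem gradient_comp_add_right {𝕜 F : Type*} [RCLike 𝕜] [NormedAddCommGroup F]
    [InnerProductSpace 𝕜 F] [CompleteSpace F] (f : F → 𝕜) (a x : F) :
    gradient (fun y => f (y + a)) x = gradient f (x + a) := by
  simp only [gradient, fderiv_comp_add_right]

theorem gradient_add_eq_of_add_eq {𝕜 F : Type*} [RCLike 𝕜] [NormedAddCommGroup F]
    [InnerProductSpace 𝕜 F] [CompleteSpace F] {f : F → 𝕜} {a : F} (h : ∀ x, f (x + a) = f x)
    (x : F) : gradient f (x + a) = gradient f x := by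
  rw [← gradient_comp_add_right, funext h]

/-- Gradient equality: if `∇f(u) ∈ A` for all `u` and `P_A u₁ = P_A u₂`,
then `∇f(u₁) = ∇f(u₂)`. -/
theorem stmt6 {H : Type*} [NormedAddCommGroup H] [InnerProductSpace ℝ H]
    [CompleteSpace H]
    (f : H → ℝ) (hf : ContDiff ℝ 1 f)
    (A : Submodule ℝ H) [A.HasOrthogonalProjection]
    (hgrad : ∀ u : H, gradient f u ∈ A)
    (u₁ u₂ : H) (hP : A.orthogonalProjectionOnto u₁ = A.orthogonalProjectionOnto u₂) :
    gradient f u₁ = gradient f u₂ := by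
  have hw : u₂ - u₁ ∈ Aᗮ := A.sub_mem_orthogonal_of_orthogonalProjectionOnto_eq hP.symm
  have hshift : ∀ x, f (x + (u₂ - u₁)) = f x :=
    add_eq_of_fderiv_apply_eq_zero (hf.differentiable one_ne_zero)
      fun x => fderiv_apply_eq_zero_of_gradient_mem (hgrad x) hw
  simpa using (gradient_add_eq_of_add_eq hshift u₁).symm
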